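/- arXiv:2401.06330 — 7 statements merged into one kernel-verified Lean document; each statement's English description precedes it below -/
import Mathlib

section
/- Let A be a commutative local ring with maximal ideal m such that the residue field A/m has at least 4 elements. Then there exists a unit a ∈ Aˣ such that a² - 1 is also a unit, and consequently the additive subgroup M generated by {x(a²-1) : x ∈ A, a ∈ Aˣ} ∪ {3(b+1)(c+1) : b,c ∈ Aˣ} equals A. -/
/-- The additive subgroup M of A generated by x(a²-1) (x ∈ A, a ∈ Aˣ)
and 3(b+1)(c+1) (b, c ∈ Aˣ). -/
def Msub (A : Type*) [CommRing A] : AddSubgroup A :=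
  AddSubgroup.closure
    ({y | ∃ (x : A) (a : Aˣ), y = x * ((a : A) ^ 2 - 1)} ∪
     {y | ∃ b c : Aˣ, y = 3 * ((b : A) + 1) * ((c : A) + 1)})

lemma exists_good_elt {K : Type*} [Field K]
    (h : ∃ a b c d : K, a ≠ b ∧ a ≠ c ∧ a ≠ d ∧ b ≠ c ∧ b ≠ d ∧ c ≠ d) :
    ∃ t : K, t ≠ 0 ∧ t - 1 ≠ 0 ∧ t + 1 ≠ 0 := by
  obtain ⟨a, b, c, d, hab, hac, had, hbc, hbd, hcd⟩ := h
  by_contra hc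
  push_neg at hc
  have key : ∀ t : K, t = 0 ∨ t = 1 ∨ t = -1 := by
    intro t
    by_cases h0 : t = 0
    · exact Or.inl h0
    by_cases h1 : t = 1
    · exact Or.inr (Or.inl h1)
    · exact Or.inr (Or.inr (eq_neg_of_add_eq_zero_left
        (hc t h0 (sub_ne_zero.mpr h1))))
  rcases key a with h|h|h <;> rcases key b with h'|h'|h' <;>
    rcases key c with h''|h''|h'' <;> rcases key d with h'''|h'''|h''' <;>
    simp_all

lemma isUnit_of_residue_ne_zero {A : Type*} [CommRing A] [IsLocalRing A] {x : A}
    (h : IsLocalRing.residue A x ≠ 0) : IsUnit x := by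
  by_contra hx
  apply h
  exact Ideal.Quotient.eq_zero_iff_mem.mpr
    ((IsLocalRing.mem_maximalIdeal x).mpr hx)

open IsLocalRing in
theorem stmt_10 {A : Type*} [CommRing A] [IsLocalRing A]
    (h : ∃ a b c d : ResidueField A,
      a ≠ b ∧ a ≠ c ∧ a ≠ d ∧ b ≠ c ∧ b ≠ d ∧ c ≠ d) :
    (∃ a : Aˣ, IsUnit ((a : A) ^ 2 - 1)) ∧ Msub A = ⊤ := by
  obtain ⟨t, ht0, ht1, ht2⟩ := exists_good_elt h
  obtain ⟨a, ha⟩ := IsLocalRing.residue_surjective (R := A) t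
  have hau : IsUnit a := isUnit_of_residue_ne_zero (by rw [ha]; exact ht0)
  have h1 : IsUnit (a - 1) := isUnit_of_residue_ne_zero (by
    rw [map_sub, ha, map_one]; exact ht1)
  have h2 : IsUnit (a + 1) := isUnit_of_residue_ne_zero (by
    rw [map_add, ha, map_one]; exact ht2)
  have hsq : IsUnit (a ^ 2 - 1) := by
    have : a ^ 2 - 1 = (a - 1) * (a + 1) := by ring
    rw [this]; exact h1.mul h2
  refine ⟨⟨hau.unit, by simp [hsq]⟩, ?_⟩
  rw [eq_top_iff]
  intro y _
  have : y = (y * (hsq.unit⁻¹ : Aˣ)) * ((hau.unit : A) ^ 2 - 1) := by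
    have h' : ((hau.unit : A) ^ 2 - 1) = (hsq.unit : A) := by simp
    rw [h', mul_assoc, Units.inv_mul, mul_one]
  rw [this]
  exact AddSubgroup.subset_closure (Or.inl ⟨_, hau.unit, rfl⟩)
end

section
/- Let A be a commutative local ring with maximal ideal m and residue field A/m ≅ 𝔽₂. Then the additive subgroup M of A generated by {x(a²-1) : x ∈ A, a ∈ Aˣ} ∪ {3(b+1)(c+1) : b,c ∈ Aˣ} equals m². -/
open IsLocalRing in
theorem stmt_11 {A : Type*} [CommRing A] [IsLocalRing A]
    (h : Nat.card (ResidueField A) = 2) :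
    Msub A = (maximalIdeal A ^ 2).toAddSubgroup := by
  -- every element of the residue field is 0 or 1
  have hzo : ∀ z : ResidueField A, z = 0 ∨ z = 1 := by
    intro z
    obtain ⟨x, y, hxy, huniv⟩ := Nat.card_eq_two_iff.mp h
    have h0 : (0 : ResidueField A) ∈ ({x, y} : Set _) := huniv ▸ Set.mem_univ _
    have h1 : (1 : ResidueField A) ∈ ({x, y} : Set _) := huniv ▸ Set.mem_univ _
    have hz : z ∈ ({x, y} : Set _) := huniv ▸ Set.mem_univ _
    simp only [Set.mem_insert_iff, Set.mem_singleton_iff] at h0 h1 hz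
    have h01 : (0 : ResidueField A) ≠ 1 := zero_ne_one
    rcases h0 with h0 | h0 <;> rcases h1 with h1 | h1 <;> rcases hz with hz | hz <;>
      simp_all
  have hmemker : ∀ x : A, x ∈ maximalIdeal A ↔ residue A x = 0 := by
    intro x
    rw [← IsLocalRing.ker_residue, RingHom.mem_ker]
  have h2m : (2 : A) ∈ maximalIdeal A := by
    rw [hmemker]
    have : residue A 2 = 2 := by push_cast [map_ofNat]; rfl
    rw [this]
    rcases hzo 2 with h2 | h2
    · exact h2
    · have h10 : (1 : ResidueField A) = 0 := by linear_combination h2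
      exact absurd h10 one_ne_zero
  have hum : ∀ a : Aˣ, (a : A) - 1 ∈ maximalIdeal A := by
    intro a
    rw [hmemker, map_sub, map_one, sub_eq_zero]
    rcases hzo (residue A a) with ha | ha
    · exact absurd ha (a.isUnit.map (residue A)).ne_zero
    · exact ha
  have hup : ∀ a : Aˣ, (a : A) + 1 ∈ maximalIdeal A := by
    intro a
    have := add_mem (hum a) h2m
    have e : (a : A) + 1 = ((a : A) - 1) + 2 := by ring
    rwa [e]
  -- units of the form 1 + s
  have hunit1 : ∀ s : A, s ∈ maximalIdeal A → ∃ a : Aˣ, (a : A) = 1 + s := by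
    intro s hs
    have hu : IsUnit (1 + s) := by
      by_contra hns
      have hmem : (1 + s) ∈ maximalIdeal A := (IsLocalRing.mem_maximalIdeal _).mpr hns
      have h1 : (1 : A) ∈ maximalIdeal A := by
        have h1' := sub_mem hmem hs
        simp only [add_sub_cancel_right] at h1'
        exact h1'
      exact (maximalIdeal A).ne_top_iff_one.mp (Ideal.IsMaximal.ne_top inferInstance) h1
    obtain ⟨a, ha⟩ := hu
    exact ⟨a, ha⟩
  -- generators are in Msub
  have memA : ∀ (x s : A), s ∈ maximalIdeal A → x * (2 * s + s ^ 2) ∈ Msub A := by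
    intro x s hs
    obtain ⟨a, ha⟩ := hunit1 s hs
    have e : x * (2 * s + s ^ 2) = x * ((a : A) ^ 2 - 1) := by rw [ha]; ring
    rw [e]
    exact AddSubgroup.subset_closure (Or.inl ⟨x, a, rfl⟩)
  have memC : ∀ b c : Aˣ, 3 * ((b : A) + 1) * ((c : A) + 1) ∈ Msub A := fun b c =>
    AddSubgroup.subset_closure (Or.inr ⟨b, c, rfl⟩)
  have memB : ∀ (x s t : A), s ∈ maximalIdeal A → t ∈ maximalIdeal A →
      2 * x * (s * t) ∈ Msub A := by
    intro x s t hs ht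
    have e : 2 * x * (s * t)
        = x * (2 * (s + t) + (s + t) ^ 2) - x * (2 * s + s ^ 2) - x * (2 * t + t ^ 2) := by
      ring
    rw [e]
    exact sub_mem (sub_mem (memA x (s + t) (add_mem hs ht)) (memA x s hs)) (memA x t ht)
  have mem12 : (12 : A) ∈ Msub A := by
    have := memC 1 1
    have e : 3 * (((1 : Aˣ) : A) + 1) * (((1 : Aˣ) : A) + 1) = 12 := by
      rw [Units.val_one]; norm_num
    rwa [e] at this
  have mem12s : ∀ s : A, s ∈ maximalIdeal A → 12 * s ∈ Msub A := by
    intro s hs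
    have := memB 3 s 2 hs h2m
    have e : 2 * 3 * (s * 2) = 12 * s := by ring
    rwa [e] at this
  have mem3sq : ∀ s : A, s ∈ maximalIdeal A → 3 * s ^ 2 ∈ Msub A := by
    intro s hs
    obtain ⟨a, ha⟩ := hunit1 s hs
    have hc := memC a a
    rw [ha] at hc
    have e : 3 * s ^ 2 = 3 * (1 + s + 1) * (1 + s + 1) - 12 - 12 * s := by ring
    rw [e]
    exact sub_mem (sub_mem hc mem12) (mem12s s hs)
  have memE : ∀ s t : A, s ∈ maximalIdeal A → t ∈ maximalIdeal A →
      3 * (s * t) ∈ Msub A := by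
    intro s t hs ht
    obtain ⟨a, ha⟩ := hunit1 s hs
    obtain ⟨b, hb⟩ := hunit1 t ht
    have hc := memC a b
    rw [ha, hb] at hc
    have h6s : 3 * (2 * s + s ^ 2) ∈ Msub A := memA 3 s hs
    have h6t : 3 * (2 * t + t ^ 2) ∈ Msub A := memA 3 t ht
    have e : 3 * (s * t) = 3 * (1 + s + 1) * (1 + t + 1) - 12
        - 3 * (2 * s + s ^ 2) - 3 * (2 * t + t ^ 2) + 3 * s ^ 2 + 3 * t ^ 2 := by ring
    rw [e]
    exact add_mem (add_mem (sub_mem (sub_mem (sub_mem hc mem12) h6s) h6t)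
      (mem3sq s hs)) (mem3sq t ht)
  have memST : ∀ s t : A, s ∈ maximalIdeal A → t ∈ maximalIdeal A → s * t ∈ Msub A := by
    intro s t hs ht
    have e : s * t = 3 * (s * t) - 2 * 1 * (s * t) := by ring
    rw [e]
    exact sub_mem (memE s t hs ht) (memB 1 s t hs ht)
  apply le_antisymm
  · rw [Msub]
    rw [AddSubgroup.closure_le]
    rintro y (⟨x, a, rfl⟩ | ⟨b, c, rfl⟩)
    · show x * ((a : A) ^ 2 - 1) ∈ maximalIdeal A ^ 2
      have e : x * ((a : A) ^ 2 - 1) = x * (((a : A) + 1) * ((a : A) - 1)) := by ring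
      rw [e, pow_two]
      exact Ideal.mul_mem_left _ x (Ideal.mul_mem_mul (hup a) (hum a))
    · show 3 * ((b : A) + 1) * ((c : A) + 1) ∈ maximalIdeal A ^ 2
      have e : 3 * ((b : A) + 1) * ((c : A) + 1)
          = 3 * (((b : A) + 1) * ((c : A) + 1)) := by ring
      rw [e, pow_two]
      exact Ideal.mul_mem_left _ 3 (Ideal.mul_mem_mul (hup b) (hup c))
  · intro z hz
    have hz' : z ∈ maximalIdeal A * maximalIdeal A := by
      rw [← pow_two]
      exact hz
    exact Submodule.mul_induction_on hz' (fun s hs t ht => memST s t hs ht)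
      (fun x y hx hy => add_mem hx hy)
end

section
/- Let A be a commutative local ring with maximal ideal m and residue field A/m ≅ 𝔽₃. Then the additive subgroup M of A generated by {x(a²-1) : x ∈ A, a ∈ Aˣ} ∪ {3(b+1)(c+1) : b,c ∈ Aˣ} equals m. (Key step: for a ∈ m, both a-1 and a-2 are units and a = (a-2)⁻¹((a-1)² - 1) ∈ M.) -/
open IsLocalRing in
theorem stmt_12 {A : Type*} [CommRing A] [IsLocalRing A]
    (h : Nat.card (ResidueField A) = 3) :
    Msub A = (maximalIdeal A).toAddSubgroup := by
  have hfin : Finite (ResidueField A) := Nat.finite_of_card_ne_zero (by rw [h]; norm_num)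
  letI : Fintype (ResidueField A) := Fintype.ofFinite _
  have hcard : Fintype.card (ResidueField A) = 3 := by
    rw [← Nat.card_eq_fintype_card, h]
  have h3 : (3 : ResidueField A) = 0 := by
    have := Nat.cast_card_eq_zero (ResidueField A)
    rwa [hcard] at this
    
  -- key: units square to 1 mod m
  have hsq : ∀ u : Aˣ, ((u : A) ^ 2 - 1) ∈ maximalIdeal A := by
    intro u
    have hne : (residue A (u : A)) ≠ 0 :=
      (u.isUnit.map (residue A)).ne_zero
    have : (residue A (u : A)) ^ 2 = 1 := by
      have h2 : (residue A (u : A)) ^ (Fintype.card (ResidueField A) - 1) = 1 :=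
        FiniteField.pow_card_sub_one_eq_one _ hne
      rwa [hcard] at h2
    have : residue A ((u : A) ^ 2 - 1) = 0 := by
      simp [map_sub, map_pow, this]
    exact (Ideal.Quotient.eq_zero_iff_mem).mp this
  have h3m : (3 : A) ∈ maximalIdeal A := by
    have : residue A (3 : A) = 0 := by
      rw [map_ofNat]
      exact_mod_cast h3
    exact (Ideal.Quotient.eq_zero_iff_mem).mp this
  apply le_antisymm
  · rw [Msub, AddSubgroup.closure_le]
    rintro y (⟨x, a, rfl⟩ | ⟨b, c, rfl⟩)
    · exact Ideal.mul_mem_left _ _ (hsq a)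
    · show 3 * ((b : A) + 1) * ((c : A) + 1) ∈ maximalIdeal A
      exact Ideal.mul_mem_right _ _ (Ideal.mul_mem_right _ _ h3m)
  · intro a ha
    have ha' : a ∈ maximalIdeal A := ha
    -- a - 1 is a unit
    have hone : (1 : A) ∉ maximalIdeal A := by
      intro hc
      exact (maximalIdeal.isMaximal A).ne_top ((Ideal.eq_top_iff_one _).mpr hc)
    have htwo : (2 : A) ∉ maximalIdeal A := by
      intro hc
      have : residue A (2 : A) = 0 := (Ideal.Quotient.eq_zero_iff_mem).mpr hc
      rw [map_ofNat] at this
      have hm1 : (2 : ResidueField A) = -1 := by linear_combination h3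
      rw [hm1, neg_eq_zero] at this
      exact one_ne_zero this
    have hu1 : IsUnit (a - 1) := by
      by_contra hc
      have : a - 1 ∈ maximalIdeal A := by
        rwa [IsLocalRing.mem_maximalIdeal, mem_nonunits_iff]
      have : (1 : A) ∈ maximalIdeal A := by
        have := Submodule.sub_mem _ ha' this
        simpa using this
      exact hone this
    have hu2 : IsUnit (a - 2) := by
      by_contra hc
      have : a - 2 ∈ maximalIdeal A := by
        rwa [IsLocalRing.mem_maximalIdeal, mem_nonunits_iff]
      have : (2 : A) ∈ maximalIdeal A := by
        have := Submodule.sub_mem _ ha' this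
        simpa using this
      exact htwo this
    apply AddSubgroup.subset_closure
    left
    refine ⟨(↑hu2.unit⁻¹ : Aˣ), hu1.unit, ?_⟩
    have hinv : (↑hu2.unit⁻¹ : A) * (a - 2) = 1 := by
      have := hu2.unit.inv_mul
      rwa [hu2.unit_spec] at this
    have hval : ((hu1.unit : A)) = a - 1 := hu1.unit_spec
    rw [hval]
    have : (a - 1) ^ 2 - 1 = (a - 2) * a := by ring
    rw [this, ← mul_assoc, hinv, one_mul]
end

section
/- Let A = ℤ[1/m] with m a square-free natural number divisible by 2 but not by 3. Then the additive subgroup M of A generated by {x(a²-1) : x ∈ A, a ∈ Aˣ} ∪ {3(b+1)(c+1) : b,c ∈ Aˣ} equals 3A, and A/M ≅ ℤ/3. -/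
/-- A = ℤ[1/m], realized as the localization of ℤ away from m. -/
theorem stmt_13 (m : ℕ) (hsf : Squarefree m) (h2 : 2 ∣ m) (h3 : ¬ 3 ∣ m) :
    (∀ y : Localization.Away (m : ℤ),
        y ∈ Msub (Localization.Away (m : ℤ)) ↔
          ∃ x : Localization.Away (m : ℤ), y = 3 * x) ∧
      Nonempty ((Localization.Away (m : ℤ) ⧸ Msub (Localization.Away (m : ℤ)))
        ≃+ ZMod 3) := by
  set A := Localization.Away (m : ℤ) with hA
  -- 3 does not kill m in ZMod 3
  have hm3 : IsUnit ((Int.castRingHom (ZMod 3)) (m : ℤ)) := by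
    have : ((Int.castRingHom (ZMod 3)) (m : ℤ)) = ((m : ZMod 3)) := by
      simp
    rw [this, ZMod.isUnit_iff_coprime]
    exact (Nat.coprime_comm.mp ((Nat.prime_three.coprime_iff_not_dvd).mpr h3))
  let f : A →+* ZMod 3 := Localization.awayLift (Int.castRingHom (ZMod 3)) (m : ℤ) hm3
  have hf : ∀ z : ℤ, f (algebraMap ℤ A z) = (z : ZMod 3) :=
    fun z => IsLocalization.Away.lift_eq (m : ℤ) hm3 z
  have hf3 : f (3 : A) = 0 := by
    rw [← map_ofNat (algebraMap ℤ A) 3, hf]; decide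
  -- 2 is a unit in A
  obtain ⟨k, hk⟩ := h2
  have hmu : IsUnit (algebraMap ℤ A (m : ℤ)) :=
    IsLocalization.map_units A ⟨(m : ℤ), Submonoid.mem_powers _⟩
  have hu2 : IsUnit (algebraMap ℤ A 2) := by
    refine isUnit_of_mul_isUnit_left (y := algebraMap ℤ A (k : ℤ)) ?_
    rw [← map_mul]
    have : ((2 : ℤ)) * (k : ℤ) = (m : ℤ) := by exact_mod_cast hk.symm
    rwa [this]
  set u2 : Aˣ := hu2.unit with hu2def
  have hu2v : (u2 : A) = 2 := by
    rw [hu2def, IsUnit.unit_spec]; exact map_ofNat _ 2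
  have hu2sq : (u2 : A) ^ 2 - 1 = 3 := by rw [hu2v]; norm_num
  -- f kills every generator
  have hgen : ∀ y ∈ ({y | ∃ (x : A) (a : Aˣ), y = x * ((a : A) ^ 2 - 1)} ∪
     {y | ∃ b c : Aˣ, y = 3 * ((b : A) + 1) * ((c : A) + 1)} : Set A),
      y ∈ AddMonoidHom.ker (f.toAddMonoidHom) := by
    rintro y (⟨x, a, rfl⟩ | ⟨b, c, rfl⟩)
    · have hu : ∀ u : (ZMod 3)ˣ, (u : ZMod 3) ^ 2 = 1 := by decide
      have h1 := hu (Units.map (f : A →* ZMod 3) a)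
      simp only [Units.coe_map, MonoidHom.coe_coe] at h1
      show f (x * ((a : A) ^ 2 - 1)) = 0
      rw [map_mul, map_sub, map_pow, map_one, h1]; ring
    · show f (3 * ((b : A) + 1) * ((c : A) + 1)) = 0
      rw [map_mul, map_mul, hf3]; ring
  have hsub : Msub A ≤ AddMonoidHom.ker (f.toAddMonoidHom) :=
    (AddSubgroup.closure_le _).mpr hgen
  -- f y = 0 → ∃ x, y = 3 x
  have hker : ∀ y : A, f y = 0 → ∃ x : A, y = 3 * x := by
    intro y hy
    obtain ⟨⟨z, s⟩, hs⟩ := IsLocalization.surj (Submonoid.powers (m : ℤ)) y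
    have hsu : IsUnit (algebraMap ℤ A (s : ℤ)) := IsLocalization.map_units A s
    have hfz : (z : ZMod 3) = 0 := by
      have := congrArg f hs
      rw [map_mul, hy, zero_mul, hf] at this
      exact this.symm
    have hdvd : (3 : ℤ) ∣ z := by
      rwa [ZMod.intCast_zmod_eq_zero_iff_dvd] at hfz
    obtain ⟨w, rfl⟩ := hdvd
    refine ⟨algebraMap ℤ A w * ↑hsu.unit⁻¹, ?_⟩
    have h1 : y * algebraMap ℤ A (s : ℤ) = 3 * algebraMap ℤ A w := by
      rw [hs, map_mul, map_ofNat]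
    calc y = y * (algebraMap ℤ A (s : ℤ) * ↑hsu.unit⁻¹) := by
            rw [IsUnit.mul_val_inv, mul_one]
      _ = (y * algebraMap ℤ A (s : ℤ)) * ↑hsu.unit⁻¹ := by ring
      _ = 3 * (algebraMap ℤ A w * ↑hsu.unit⁻¹) := by rw [h1]; ring
  have hiff : ∀ y : A, y ∈ Msub A ↔ ∃ x : A, y = 3 * x := by
    intro y
    constructor
    · intro hy
      exact hker y (hsub hy)
    · rintro ⟨x, rfl⟩
      apply AddSubgroup.subset_closure
      left
      exact ⟨x, u2, by rw [hu2sq]; ring⟩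
  refine ⟨hiff, ?_⟩
  have heq : Msub A = AddMonoidHom.ker (f.toAddMonoidHom) := by
    ext y
    rw [hiff y]
    constructor
    · rintro ⟨x, rfl⟩
      show f (3 * x) = 0
      rw [map_mul, hf3]; ring
    · intro hy
      exact hker y hy
  have hsurj : Function.Surjective (f.toAddMonoidHom) := by
    intro z
    obtain ⟨n, rfl⟩ := ZMod.intCast_surjective z
    exact ⟨algebraMap ℤ A n, hf n⟩
  exact ⟨(QuotientAddGroup.quotientAddEquivOfEq heq).trans
    (QuotientAddGroup.quotientKerEquivOfSurjective f.toAddMonoidHom hsurj)⟩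
end

section
/- Let A = ℤ[1/m] with m a square-free odd natural number divisible by 3. Then the additive subgroup M of A generated by {x(a²-1) : x ∈ A, a ∈ Aˣ} ∪ {3(b+1)(c+1) : b,c ∈ Aˣ} equals 4A, and A/M ≅ ℤ/4. -/
/-!
In `A = ℤ[1/m]` every unit `u` is odd, so `2 ∣ u + 1`, and then `4 ∣ u² - 1 = (u + 1)² - 2(u + 1)`
and `4 ∣ 3(b + 1)(c + 1)`; hence `M ⊆ 4A`. Conversely `3` is a unit, so `8x = x(3² - 1) ∈ M` and
`4 = 3·2·2 - (3² - 1) ∈ M`; since every element of `A` is an integer modulo `2A`, this gives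
`4A ⊆ ℤ·4 + 8A ⊆ M`. Finally `4A` is the kernel of the reduction `A → ℤ/4`.
-/

section Msub

variable {A : Type*} [CommRing A]

theorem Msub_le_span_four (hodd : ∀ u : Aˣ, (2 : A) ∣ u + 1) :
    Msub A ≤ (Ideal.span {(4 : A)}).toAddSubgroup := by
  rw [Msub, AddSubgroup.closure_le]
  rintro y (⟨x, a, rfl⟩ | ⟨b, c, rfl⟩) <;>
    simp only [SetLike.mem_coe, Submodule.mem_toAddSubgroup, Ideal.mem_span_singleton]
  · obtain ⟨w, hw⟩ := hodd a
    have hsq : (a : A) ^ 2 - 1 = 4 * (w ^ 2 - w) := by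
      linear_combination (↑a - 1 + 2 * w) * hw
    exact ⟨x * (w ^ 2 - w), by rw [hsq]; ring⟩
  · obtain ⟨wb, hwb⟩ := hodd b
    obtain ⟨wc, hwc⟩ := hodd c
    exact ⟨3 * wb * wc, by rw [hwb, hwc]; ring⟩

theorem eight_mul_mem_Msub (h3 : IsUnit (3 : A)) (x : A) : 8 * x ∈ Msub A :=
  AddSubgroup.subset_closure <| Or.inl ⟨x, h3.unit, by rw [h3.unit_spec]; ring⟩

theorem four_mem_Msub (h3 : IsUnit (3 : A)) : (4 : A) ∈ Msub A := by
  have h12 : (12 : A) ∈ Msub A :=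
    AddSubgroup.subset_closure <| Or.inr ⟨1, 1, by rw [Units.val_one]; norm_num⟩
  have h8 := eight_mul_mem_Msub h3 1
  convert sub_mem h12 h8 using 1
  norm_num

theorem span_four_le_Msub (h3 : IsUnit (3 : A)) (hmod2 : ∀ x : A, ∃ k : ℤ, (2 : A) ∣ x - k) :
    (Ideal.span {(4 : A)}).toAddSubgroup ≤ Msub A := by
  intro y hy
  rw [Submodule.mem_toAddSubgroup, Ideal.mem_span_singleton] at hy
  obtain ⟨x, rfl⟩ := hy
  obtain ⟨k, u, hu⟩ := hmod2 x
  have hx : 4 * x = k • (4 : A) + 8 * u := by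
    rw [zsmul_eq_mul]; linear_combination 4 * hu
  rw [hx]
  exact add_mem (zsmul_mem (four_mem_Msub h3) k) (eight_mul_mem_Msub h3 u)

end Msub

section ReductionMod

variable {m n : ℕ} (A : Type*) [CommRing A] [Algebra ℤ A] [IsLocalization.Away (m : ℤ) A]

noncomputable def reductionMod (hmn : m.Coprime n) : A →+* ZMod n :=
  IsLocalization.Away.lift (m : ℤ) (g := Int.castRingHom (ZMod n)) <| by
    simpa using (ZMod.isUnit_iff_coprime m n).2 hmn

variable {A}

theorem reductionMod_algebraMap (hmn : m.Coprime n) (k : ℤ) :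
    reductionMod A hmn (algebraMap ℤ A k) = k :=
  IsLocalization.Away.lift_eq ..

theorem reductionMod_surjective (hmn : m.Coprime n) : Function.Surjective (reductionMod A hmn) :=
  fun z ↦ (ZMod.intCast_surjective z).imp' (algebraMap ℤ A) fun k hk ↦ by
    rw [reductionMod_algebraMap, hk]

theorem reductionMod_eq_zero_iff (hmn : m.Coprime n) (y : A) :
    reductionMod A hmn y = 0 ↔ (n : A) ∣ y := by
  constructor
  · intro hy
    obtain ⟨⟨z, s⟩, hzs⟩ := IsLocalization.surj (Submonoid.powers (m : ℤ)) y
    have hz : (n : ℤ) ∣ z := by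
      rw [← ZMod.intCast_zmod_eq_zero_iff_dvd, ← reductionMod_algebraMap (A := A) hmn, ← hzs,
        map_mul, hy, zero_mul]
    obtain ⟨w, rfl⟩ := hz
    obtain ⟨s, hs⟩ := IsLocalization.map_units A s
    refine ⟨algebraMap ℤ A w * ↑s⁻¹, ?_⟩
    rw [← hs, map_mul, map_natCast] at hzs
    rw [← mul_assoc, ← hzs, mul_assoc, Units.mul_inv, mul_one]
  · rintro ⟨x, rfl⟩
    simp

theorem exists_intCast_dvd_sub (hmn : m.Coprime n) (x : A) : ∃ k : ℤ, (n : A) ∣ x - k := by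
  obtain ⟨k, hk⟩ := ZMod.intCast_surjective (reductionMod A hmn x)
  exact ⟨k, (reductionMod_eq_zero_iff hmn _).1 (by rw [map_sub, map_intCast, hk, sub_self])⟩

theorem two_dvd_unit_add_one (hm : m.Coprime 2) (u : Aˣ) : (2 : A) ∣ u + 1 := by
  have hu : reductionMod A hm u = 1 := congrArg Units.val (Subsingleton.elim (Units.map _ u) 1)
  exact_mod_cast (reductionMod_eq_zero_iff hm _).1 (by rw [map_add, hu, map_one]; rfl)

theorem Msub_eq_span_four (hm2 : m.Coprime 2) (h3 : 3 ∣ m) :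
    Msub A = (Ideal.span {(4 : A)}).toAddSubgroup := by
  have h3u : IsUnit (3 : A) := by
    simpa using IsLocalization.Away.isUnit_of_dvd (S := A) (m : ℤ) (r := 3) (by exact_mod_cast h3)
  refine le_antisymm (Msub_le_span_four (two_dvd_unit_add_one hm2)) (span_four_le_Msub h3u ?_)
  exact_mod_cast exists_intCast_dvd_sub hm2

end ReductionMod

theorem stmt_14_general (m : ℕ) (h2 : ¬ 2 ∣ m) (h3 : 3 ∣ m) :
    (∀ y : Localization.Away (m : ℤ),
        y ∈ Msub (Localization.Away (m : ℤ)) ↔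
          ∃ x : Localization.Away (m : ℤ), y = 4 * x) ∧
      Nonempty ((Localization.Away (m : ℤ) ⧸ Msub (Localization.Away (m : ℤ)))
        ≃+ ZMod 4) := by
  set A := Localization.Away (m : ℤ)
  have hm2 : m.Coprime 2 := ((Nat.Prime.coprime_iff_not_dvd Nat.prime_two).2 h2).symm
  have hm4 : m.Coprime 4 := hm2.pow_right 2
  have hmem (y : A) : y ∈ Msub A ↔ ∃ x, y = 4 * x := by
    rw [Msub_eq_span_four hm2 h3, Submodule.mem_toAddSubgroup, Ideal.mem_span_singleton]
    rfl
  refine ⟨hmem, ⟨?_⟩⟩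
  let φ := (reductionMod A hm4).toAddMonoidHom
  have hker : φ.ker = Msub A := by
    ext y
    rw [hmem, AddMonoidHom.mem_ker]
    exact_mod_cast reductionMod_eq_zero_iff hm4 y
  exact (QuotientAddGroup.quotientAddEquivOfEq hker.symm).trans
    (QuotientAddGroup.quotientKerEquivOfSurjective φ (reductionMod_surjective hm4))

/-- A = ℤ[1/m], realized as the localization of ℤ away from m. -/
theorem stmt_14 (m : ℕ) (hsf : Squarefree m) (h2 : ¬ 2 ∣ m) (h3 : 3 ∣ m) :
    (∀ y : Localization.Away (m : ℤ),
        y ∈ Msub (Localization.Away (m : ℤ)) ↔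
          ∃ x : Localization.Away (m : ℤ), y = 4 * x) ∧
      Nonempty ((Localization.Away (m : ℤ) ⧸ Msub (Localization.Away (m : ℤ)))
        ≃+ ZMod 4) :=
  stmt_14_general m h2 h3
end

section
/- Let A = ℤ[1/m] with m a square-free natural number coprime to 6. Then the additive subgroup M of A generated by {x(a²-1) : x ∈ A, a ∈ Aˣ} ∪ {3(b+1)(c+1) : b,c ∈ Aˣ} equals 12A, and A/M ≅ ℤ/12. -/
/-- A = ℤ[1/m], realized as the localization of ℤ away from m. -/
theorem stmt_15 (m : ℕ) (hsf : Squarefree m) (h6 : Nat.Coprime m 6) :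
    (∀ y : Localization.Away (m : ℤ),
        y ∈ Msub (Localization.Away (m : ℤ)) ↔
          ∃ x : Localization.Away (m : ℤ), y = 12 * x) ∧
      Nonempty ((Localization.Away (m : ℤ) ⧸ Msub (Localization.Away (m : ℤ)))
        ≃+ ZMod 12) := by
  set A := Localization.Away (m : ℤ) with hA
  have h2 : Nat.Coprime m 2 := Nat.Coprime.coprime_dvd_right (by norm_num) h6
  have h3 : Nat.Coprime m 3 := Nat.Coprime.coprime_dvd_right (by norm_num) h6
  have h12 : Nat.Coprime m 12 := by
    have h : (12:ℕ) = 2*(2*3) := by norm_num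
    rw [h]; exact h2.mul_right (h2.mul_right h3)
  have hunit : IsUnit ((Int.castRingHom (ZMod 12)) (m : ℤ)) := by
    simpa using (ZMod.isUnit_iff_coprime m 12).2 h12
  let φ : A →+* ZMod 12 := IsLocalization.Away.lift (m : ℤ) hunit
  have hφf : ∀ n : ℤ, φ (algebraMap ℤ A n) = (n : ZMod 12) := fun n =>
    IsLocalization.Away.lift_eq (m : ℤ) hunit n
  -- kernel characterization
  have hker : ∀ y : A, φ y = 0 ↔ ∃ x : A, y = 12 * x := by
    intro y
    constructor
    · intro h0
      obtain ⟨k, r, hkr⟩ := IsLocalization.Away.surj (S := A) (m : ℤ) y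
      have hu : IsUnit (algebraMap ℤ A (m:ℤ) ^ k) :=
        IsLocalization.Away.algebraMap_pow_isUnit (S := A) (m:ℤ) k
      have hr0 : ((r : ℤ) : ZMod 12) = 0 := by
        have := congrArg φ hkr
        rw [map_mul, map_pow, hφf, hφf, h0, zero_mul] at this
        exact this.symm
      obtain ⟨r', hr'⟩ := (ZMod.intCast_zmod_eq_zero_iff_dvd r 12).1 hr0
      refine ⟨algebraMap ℤ A r' * ↑hu.unit⁻¹, ?_⟩
      have h1 : y * ↑hu.unit = 12 * algebraMap ℤ A r' := by
        rw [IsUnit.unit_spec, hkr, hr', map_mul]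
        norm_num
      calc y = y * ↑hu.unit * ↑hu.unit⁻¹ := by
              rw [mul_assoc, hu.unit.mul_inv, mul_one]
        _ = 12 * (algebraMap ℤ A r' * ↑hu.unit⁻¹) := by rw [h1, mul_assoc]
    · rintro ⟨x, rfl⟩
      rw [map_mul]
      have h12z : φ 12 = 0 := by
        have h := hφf 12
        norm_num at h
        rw [h]
        decide
      rw [h12z, zero_mul]
  have husq : ∀ u : (ZMod 12)ˣ, (u : ZMod 12) ^ 2 = 1 := by decide
  have h3uv : ∀ u v : (ZMod 12)ˣ, 3 * ((u : ZMod 12) + 1) * ((v : ZMod 12) + 1) = 0 := by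
    decide
  have hMker : Msub A = AddMonoidHom.ker φ.toAddMonoidHom := by
    apply le_antisymm
    · rw [Msub, AddSubgroup.closure_le]
      rintro y (⟨x, a, rfl⟩ | ⟨b, c, rfl⟩) <;>
        refine AddMonoidHom.mem_ker.2 ?_ <;> show φ _ = 0
      · have ha : φ (a : A) = ((Units.map (φ : A →* ZMod 12) a : (ZMod 12)ˣ) : ZMod 12) :=
          (Units.coe_map _ _).symm
        rw [map_mul, map_sub, map_pow, map_one, ha, husq, sub_self, mul_zero]
      · have hb : φ (b : A) = ((Units.map (φ : A →* ZMod 12) b : (ZMod 12)ˣ) : ZMod 12) :=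
          (Units.coe_map _ _).symm
        have hc : φ (c : A) = ((Units.map (φ : A →* ZMod 12) c : (ZMod 12)ˣ) : ZMod 12) :=
          (Units.coe_map _ _).symm
        have hphi3 : φ (3 : A) = 3 := by
          have h := hφf 3
          norm_num at h
          rw [h]
        rw [map_mul, map_mul, map_add, map_add, map_one, hb, hc, hphi3, h3uv]
    · intro y hy
      have h0 : φ y = 0 := hy
      obtain ⟨x, rfl⟩ := (hker y).1 h0
      -- show 12 * x ∈ Msub A
      obtain ⟨k, t, hkt⟩ := IsLocalization.Away.surj (S := A) (m : ℤ) x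
      have hmu : IsUnit (algebraMap ℤ A (m:ℤ)) :=
        IsLocalization.Away.algebraMap_isUnit (S := A) (m:ℤ)
      set a : Aˣ := hmu.unit ^ k with ha
      have hav : (a : A) = algebraMap ℤ A (m:ℤ) ^ k := by
        rw [ha, Units.val_pow_eq_pow_val, IsUnit.unit_spec]
      have h12M : (12 : A) ∈ Msub A := by
        have hmem : (3 : A) * (((1 : Aˣ) : A) + 1) * (((1 : Aˣ) : A) + 1) ∈ Msub A :=
          AddSubgroup.subset_closure (Or.inr ⟨1, 1, rfl⟩)
        have he : (3 : A) * (((1 : Aˣ) : A) + 1) * (((1 : Aˣ) : A) + 1) = 12 := by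
          rw [Units.val_one]; norm_num
        rwa [he] at hmem
      have hgen : (-(12 * x)) * ((a : A) ^ 2 - 1) ∈ Msub A :=
        AddSubgroup.subset_closure (Or.inl ⟨-(12 * x), a, rfl⟩)
      have heq : 12 * x =
          (-(12 * x)) * ((a : A) ^ 2 - 1) + (t * (m:ℤ) ^ k) • (12 : A) := by
        have hxa : x * (a : A) = algebraMap ℤ A t := by rw [hav]; exact hkt
        have hsm : ((t * (m:ℤ) ^ k : ℤ) : A) = algebraMap ℤ A t * (a : A) := by
          rw [hav, ← map_pow, ← map_mul, eq_intCast]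
        rw [zsmul_eq_mul, hsm]
        linear_combination (12 * (a : A)) * hxa
      rw [heq]
      exact AddSubgroup.add_mem _ hgen (AddSubgroup.zsmul_mem _ h12M _)
  constructor
  · intro y
    rw [hMker]
    exact Iff.trans (by simp [AddMonoidHom.mem_ker]) (hker y)
  · have hsurj : Function.Surjective φ.toAddMonoidHom := by
      intro z
      obtain ⟨n, hn⟩ := ZMod.intCast_surjective (n := 12) z
      exact ⟨algebraMap ℤ A n, by simpa [hφf n] using hn⟩
    exact ⟨(QuotientAddGroup.quotientAddEquivOfEq hMker).trans
      (QuotientAddGroup.quotientKerEquivOfSurjective φ.toAddMonoidHom hsurj)⟩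
end

section
/- Let A be a commutative ring, u, v ∈ Aˣ, and suppose d, e ∈ A satisfy 1 - de ∈ Aˣ. Then in A, modulo the additive subgroup M generated by {x(a²-1)} ∪ {3(b+1)(c+1)}, the identity -e(1-de)⁻¹ + d + e - d(1-de)⁻¹ + 3(-de) ≡ de(d + e - 3) holds; i.e., -e(1-de)⁻¹ + d + e - d(1-de)⁻¹ - 3de - de(d+e-3) ∈ M. -/
theorem stmt_19 {A : Type*} [CommRing A] (d e : A) (h : IsUnit (1 - d * e)) :
    -e * Ring.inverse (1 - d * e) + d + e - d * Ring.inverse (1 - d * e)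
      - 3 * (d * e) - d * e * (d + e - 3) ∈ Msub A := by
  apply AddSubgroup.subset_closure
  left
  refine ⟨(d + e) * Ring.inverse (1 - d * e), h.unit, ?_⟩
  have h1 : Ring.inverse (1 - d * e) * (1 - d * e) = 1 := Ring.inverse_mul_cancel _ h
  rw [h.unit_spec]
  linear_combination (-(d + e) * (1 - d * e)) * h1
end
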